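/- arXiv:1310.0708 — 3 statements merged into one kernel-verified Lean document; each statement's English description precedes it below -/
import Mathlib

section
/- If Q : ℝ → ℝ is continuous with Q(s) ≥ 0 for all s, and y : ℝ → ℝ is a nonconstant solution of y'' + Q·y = 0 defined on all of ℝ, then y has at least one zero. -/
/-!
A continuous function on `ℝ` without zeros has constant sign. If `y > 0` then `y'' = -Q y ≤ 0`,
so `y` is concave and bounded below; if `y < 0` it is convex and bounded above. A convex
function on `ℝ` lies above each of its tangent lines, so it can only be bounded above if every
tangent is horizontal, i.e. if it is constant.
-/

open Set

theorem Continuous.forall_pos_or_forall_neg {X : Type*} [TopologicalSpace X] [PreconnectedSpace X]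
    {f : X → ℝ} (hf : Continuous f) (hne : ∀ x, f x ≠ 0) :
    (∀ x, 0 < f x) ∨ (∀ x, f x < 0) := by
  by_contra! h
  obtain ⟨⟨a, ha⟩, ⟨b, hb⟩⟩ := h
  obtain ⟨c, hc⟩ := intermediate_value_univ a b hf ⟨ha, hb⟩
  exact hne c hc

namespace ConvexOn

variable {S : Set ℝ} {f : ℝ → ℝ}

theorem add_deriv_mul_sub_le (hf : ConvexOn ℝ S f) {a t : ℝ} (ha : a ∈ S) (ht : t ∈ S)
    (hd : DifferentiableAt ℝ f a) : f a + deriv f a * (t - a) ≤ f t := by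
  rcases lt_trichotomy a t with hat | rfl | hta
  · have h := hf.deriv_le_slope ha ht hat hd
    rw [slope_def_field, le_div_iff₀ (sub_pos.2 hat)] at h
    linarith
  · simp
  · have h := hf.slope_le_deriv ht ha hta hd
    rw [slope_def_field, div_le_iff₀ (sub_pos.2 hta)] at h
    linarith

theorem deriv_eq_zero_of_bddAbove (hf : ConvexOn ℝ univ f) {a : ℝ}
    (hd : DifferentiableAt ℝ f a) (hb : BddAbove (range f)) : deriv f a = 0 := by
  by_contra h
  obtain ⟨M, hM⟩ := hb
  -- the tangent line at `a` reaches height `M + 1` at `t`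
  set t := a + (M + 1 - f a) / deriv f a
  have htangent := hf.add_deriv_mul_sub_le (mem_univ a) (mem_univ t) hd
  have hstep : deriv f a * (t - a) = M + 1 - f a := by
    simp only [t, add_sub_cancel_left]
    field_simp
  linarith [hM ⟨t, rfl⟩]

theorem eq_of_bddAbove (hf : ConvexOn ℝ univ f) (hd : Differentiable ℝ f)
    (hb : BddAbove (range f)) (x y : ℝ) : f x = f y :=
  is_const_of_deriv_eq_zero hd (fun _ ↦ hf.deriv_eq_zero_of_bddAbove (hd _) hb) x y

end ConvexOn

theorem ConcaveOn.eq_of_bddBelow {f : ℝ → ℝ} (hf : ConcaveOn ℝ univ f)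
    (hd : Differentiable ℝ f) (hb : BddBelow (range f)) (x y : ℝ) : f x = f y := by
  obtain ⟨m, hm⟩ := hb
  have hb' : BddAbove (range (-f)) := ⟨-m, by rintro _ ⟨z, rfl⟩; simpa using hm ⟨z, rfl⟩⟩
  simpa using hf.neg.eq_of_bddAbove hd.neg hb' x y

theorem exists_zero_of_nonconstant_solution_general (Q y : ℝ → ℝ)
    (hQpos : ∀ s, 0 ≤ Q s)
    (hy : Differentiable ℝ y) (hy' : Differentiable ℝ (deriv y))
    (hode : ∀ s, deriv (deriv y) s + Q s * y s = 0)
    (hnc : ¬ ∃ k : ℝ, ∀ s, y s = k) :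
    ∃ s, y s = 0 := by
  by_contra! hzero
  have hy'' : ∀ s, deriv^[2] y s = -(Q s * y s) := fun s ↦ eq_neg_of_add_eq_zero_left (hode s)
  refine hnc ⟨y 0, fun s ↦ ?_⟩
  rcases hy.continuous.forall_pos_or_forall_neg hzero with hpos | hneg
  · have hconc : ConcaveOn ℝ univ y := concaveOn_univ_of_deriv2_nonpos hy hy' fun s ↦ by
      rw [hy'', neg_nonpos]; exact mul_nonneg (hQpos s) (hpos s).le
    exact hconc.eq_of_bddBelow hy ⟨0, by rintro _ ⟨s, rfl⟩; exact (hpos s).le⟩ s 0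
  · have hconv : ConvexOn ℝ univ y := convexOn_univ_of_deriv2_nonneg hy hy' fun s ↦ by
      rw [hy'', neg_nonneg]; exact mul_nonpos_of_nonneg_of_nonpos (hQpos s) (hneg s).le
    exact hconv.eq_of_bddAbove hy ⟨0, by rintro _ ⟨s, rfl⟩; exact (hneg s).le⟩ s 0

/-- If `Q ≥ 0` is continuous and `y` is a nonconstant solution of `y'' + Q y = 0`
on all of `ℝ`, then `y` has at least one zero. -/
theorem exists_zero_of_nonconstant_solution (Q y : ℝ → ℝ) (hQ : Continuous Q)
    (hQpos : ∀ s, 0 ≤ Q s)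
    (hy : Differentiable ℝ y) (hy' : Differentiable ℝ (deriv y))
    (hode : ∀ s, deriv (deriv y) s + Q s * y s = 0)
    (hnc : ¬ ∃ k : ℝ, ∀ s, y s = k) :
    ∃ s, y s = 0 :=
  exists_zero_of_nonconstant_solution_general Q y hQpos hy hy' hode hnc
end

section
/- (Sturm separation theorem) Let y₁, y₂ : ℝ → ℝ be two linearly independent solutions of y'' + Q(s)·y = 0 with Q continuous. If a < b are two consecutive zeros of y₂ (i.e., y₂(a) = y₂(b) = 0 and y₂ ≠ 0 on (a,b)), then y₁ has exactly one zero in the open interval (a, b). -/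
/-!
Between two zeros of `u`, the quotient `u / v` would satisfy Rolle's theorem if `v` had no zero
there, and its derivative is `-W(u, v) / v²`, contradicting the nonvanishing of the Wronskian.
Applied to `(y₂, y₁)` this gives a zero of `y₁` in `(a, b)`; applied to `(y₁, y₂)` it shows that two
zeros of `y₁` in `(a, b)` would enclose a zero of `y₂`.
-/

open Set

noncomputable def wronskian (u v : ℝ → ℝ) (s : ℝ) : ℝ :=
  u s * deriv v s - v s * deriv u s

lemma wronskian_comm (u v : ℝ → ℝ) (s : ℝ) : wronskian v u s = -wronskian u v s := by
  unfold wronskian; ring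

lemma ne_zero_of_wronskian_ne_zero {u v : ℝ → ℝ} {s : ℝ} (hW : wronskian u v s ≠ 0)
    (hu : u s = 0) : v s ≠ 0 := by
  intro hv
  exact hW (by simp [wronskian, hu, hv])

lemma exists_mem_Ioo_eq_zero_of_wronskian_ne_zero {u v : ℝ → ℝ} (hu : Differentiable ℝ u)
    (hv : Differentiable ℝ v) {a b : ℝ} (hW : ∀ s ∈ Icc a b, wronskian u v s ≠ 0)
    (hab : a < b) (ha : u a = 0) (hb : u b = 0) : ∃ c ∈ Ioo a b, v c = 0 := by
  by_contra! hv_ne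
  have hv_Icc : ∀ s ∈ Icc a b, v s ≠ 0 := by
    intro s hs
    rcases eq_endpoints_or_mem_Ioo_of_mem_Icc hs with rfl | rfl | hs
    · exact ne_zero_of_wronskian_ne_zero (hW s hs) ha
    · exact ne_zero_of_wronskian_ne_zero (hW s hs) hb
    · exact hv_ne s hs
  obtain ⟨c, hc, hderiv⟩ := exists_hasDerivAt_eq_zero (f := fun s => u s / v s)
    (f' := fun s => (deriv u s * v s - u s * deriv v s) / v s ^ 2) hab
    (hu.continuous.continuousOn.div hv.continuous.continuousOn hv_Icc)
    (by simp [ha, hb])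
    (fun s hs => hu.differentiableAt.hasDerivAt.div hv.differentiableAt.hasDerivAt
      (hv_Icc s (Ioo_subset_Icc_self hs)))
  have hvc : v c ≠ 0 := hv_Icc c (Ioo_subset_Icc_self hc)
  refine hW c (Ioo_subset_Icc_self hc) ?_
  rw [div_eq_zero_iff, or_iff_left (pow_ne_zero 2 hvc)] at hderiv
  rw [wronskian]
  linear_combination -hderiv

theorem sturm_separation_general (y₁ y₂ : ℝ → ℝ)
    (hy₁ : Differentiable ℝ y₁)
    (hy₂ : Differentiable ℝ y₂)
    (hW : ∀ s, y₁ s * deriv y₂ s - y₂ s * deriv y₁ s ≠ 0)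
    (a b : ℝ) (hab : a < b) (ha : y₂ a = 0) (hb : y₂ b = 0)
    (hcons : ∀ s ∈ Set.Ioo a b, y₂ s ≠ 0) :
    ∃! s, s ∈ Set.Ioo a b ∧ y₁ s = 0 := by
  have hW₁₂ : ∀ s ∈ Icc a b, wronskian y₁ y₂ s ≠ 0 := fun s _ => hW s
  have hW₂₁ : ∀ s ∈ Icc a b, wronskian y₂ y₁ s ≠ 0 := fun s _ => by
    rw [wronskian_comm]; exact neg_ne_zero.mpr (hW s)
  obtain ⟨c, hc, hc0⟩ :=
    exists_mem_Ioo_eq_zero_of_wronskian_ne_zero hy₂ hy₁ hW₂₁ hab ha hb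
  have no_two_zeros : ∀ t ∈ Ioo a b, ∀ t' ∈ Ioo a b, t < t' → y₁ t = 0 → y₁ t' ≠ 0 := by
    intro t ht t' ht' htt' h0 h0'
    obtain ⟨d, hd, hd0⟩ := exists_mem_Ioo_eq_zero_of_wronskian_ne_zero hy₁ hy₂
      (fun s hs => hW₁₂ s ⟨ht.1.le.trans hs.1, hs.2.trans ht'.2.le⟩) htt' h0 h0'
    exact hcons d ⟨ht.1.trans hd.1, hd.2.trans ht'.2⟩ hd0
  refine ⟨c, ⟨hc, hc0⟩, fun t ⟨ht, ht0⟩ => ?_⟩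
  rcases lt_trichotomy t c with htc | rfl | hct
  · exact absurd hc0 (no_two_zeros t ht c hc htc ht0)
  · rfl
  · exact absurd ht0 (no_two_zeros c hc t ht hct hc0)

/-- Sturm separation theorem: between two consecutive zeros of `y₂`, a linearly
independent solution `y₁` has exactly one zero. -/
theorem sturm_separation (Q y₁ y₂ : ℝ → ℝ) (hQ : Continuous Q)
    (hy₁ : Differentiable ℝ y₁) (hy₁' : Differentiable ℝ (deriv y₁))
    (hy₂ : Differentiable ℝ y₂) (hy₂' : Differentiable ℝ (deriv y₂))
    (hode₁ : ∀ s, deriv (deriv y₁) s + Q s * y₁ s = 0)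
    (hode₂ : ∀ s, deriv (deriv y₂) s + Q s * y₂ s = 0)
    (hW : ∀ s, y₁ s * deriv y₂ s - y₂ s * deriv y₁ s ≠ 0)
    (a b : ℝ) (hab : a < b) (ha : y₂ a = 0) (hb : y₂ b = 0)
    (hcons : ∀ s ∈ Set.Ioo a b, y₂ s ≠ 0) :
    ∃! s, s ∈ Set.Ioo a b ∧ y₁ s = 0 :=
  sturm_separation_general y₁ y₂ hy₁ hy₂ hW a b hab ha hb hcons
end

section
/- Assume y'' + Q(s)·y = 0 with Q continuous, Q(s) ≥ 0 for all s, and the equation nonoscillatory at s = +∞. Let y₂ be a principal solution at +∞ having a largest zero at s = a, and let y₁ be a solution linearly independent of y₂. Then y₁ vanishes at some point s > a. -/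
/-
If `y₁` had no zero after `a`, then it would not vanish on `[a, ∞)` either (a common zero with
`y₂` at `a` would kill the Wronskian), so `y₂ / y₁` would be differentiable there with derivative
`W / y₁²`, where `W` is the Wronskian. Since `y₂ / y₁` vanishes at `a` and tends to `0` at `+∞`
(principality of `y₂`), Rolle's theorem on `[a, ∞)` produces a zero of this derivative, hence of
`W`, which is impossible.
-/

open Filter

/-- `y` is a (twice differentiable) solution of `y'' + Q y = 0` on `ℝ`. -/
def IsSol (Q y : ℝ → ℝ) : Prop :=
  Differentiable ℝ y ∧ Differentiable ℝ (deriv y) ∧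
    ∀ s, deriv (deriv y) s + Q s * y s = 0

open Set Topology

theorem exists_hasDerivAt_eq_zero_of_tendsto_atTop {f f' : ℝ → ℝ} {a : ℝ}
    (hfc : ContinuousOn f (Ici a)) (hf : Tendsto f atTop (𝓝 (f a)))
    (hff' : ∀ x ∈ Ioi a, HasDerivAt f (f' x) x) : ∃ c ∈ Ioi a, f' c = 0 := by
  rcases em (∃ b ∈ Ioi a, f b ≠ f a) with ⟨b, hb, hfb⟩ | hconst
  swap
  · push Not at hconst
    have hc : a + 1 ∈ Ioi a := by simp
    have hfeq : f =ᶠ[𝓝 (a + 1)] fun _ => f a :=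
      eventually_of_mem (Ioi_mem_nhds hc) hconst
    exact ⟨a + 1, hc, ((hff' _ hc).congr_of_eventuallyEq hfeq.symm).unique (hasDerivAt_const _ _)⟩
  wlog hlt : f a < f b generalizing f f'
  · obtain ⟨c, hc, hc0⟩ := this hfc.neg hf.neg (fun x hx => (hff' x hx).neg) (by simpa using hfb)
      (by simpa using lt_of_le_of_ne (not_lt.mp hlt) hfb)
    exact ⟨c, hc, neg_eq_zero.mp hc0⟩
  obtain ⟨u, hfu, hbu⟩ := ((hf.eventually (gt_mem_nhds hlt)).and (eventually_gt_atTop b)).exists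
  have hau : a ≤ u := by linarith [mem_Ioi.mp hb]
  obtain ⟨c, hc, hmax⟩ := isCompact_Icc.exists_isMaxOn (nonempty_Icc.mpr hau)
    (hfc.mono Icc_subset_Ici_self)
  have hbc : f b ≤ f c := hmax ⟨(mem_Ioi.mp hb).le, hbu.le⟩
  have hca : a < c := lt_of_le_of_ne hc.1 (by rintro rfl; linarith)
  have hcu : c < u := lt_of_le_of_ne hc.2 (by rintro rfl; linarith)
  exact ⟨c, hca, (hmax.isLocalMax (Icc_mem_nhds hca hcu)).hasDerivAt_eq_zero (hff' c hca)⟩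

theorem hasDerivAt_div_eq_wronskian_div_sq {y₁ y₂ : ℝ → ℝ} {s : ℝ}
    (h₁ : DifferentiableAt ℝ y₁ s) (h₂ : DifferentiableAt ℝ y₂ s) (hy₁ : y₁ s ≠ 0) :
    HasDerivAt (fun t => y₂ t / y₁ t)
      ((y₁ s * deriv y₂ s - y₂ s * deriv y₁ s) / y₁ s ^ 2) s :=
  (h₂.hasDerivAt.div h₁.hasDerivAt hy₁).congr_deriv (by ring)

theorem lin_indep_solution_vanishes_after_largest_zero_of_principal_general
    (Q y₁ y₂ : ℝ → ℝ) (a : ℝ)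
    (hy₂ : IsSol Q y₂)
    (hprincipal : ∀ z, IsSol Q z → (∀ s, z s * deriv y₂ s - y₂ s * deriv z s ≠ 0) →
      Tendsto (fun s => y₂ s / z s) atTop (nhds 0))
    (ha : y₂ a = 0)
    (hy₁ : IsSol Q y₁)
    (hW : ∀ s, y₁ s * deriv y₂ s - y₂ s * deriv y₁ s ≠ 0) :
    ∃ s, a < s ∧ y₁ s = 0 := by
  by_contra! hpos
  have hne : ∀ s ∈ Ici a, y₁ s ≠ 0 := by
    intro s hs
    rcases (mem_Ici.mp hs).eq_or_lt with rfl | hlt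
    · exact fun h0 => hW a (by rw [h0, ha]; ring)
    · exact hpos s hlt
  have hderiv : ∀ s ∈ Ici a, HasDerivAt (fun t => y₂ t / y₁ t)
      ((y₁ s * deriv y₂ s - y₂ s * deriv y₁ s) / y₁ s ^ 2) s := fun s hs =>
    hasDerivAt_div_eq_wronskian_div_sq (hy₁.1 s) (hy₂.1 s) (hne s hs)
  have htend : Tendsto (fun t => y₂ t / y₁ t) atTop (𝓝 (y₂ a / y₁ a)) := by
    simpa [ha] using hprincipal y₁ hy₁ hW
  obtain ⟨c, hc, hc0⟩ := exists_hasDerivAt_eq_zero_of_tendsto_atTop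
    (fun s hs => (hderiv s hs).continuousAt.continuousWithinAt) htend
    (fun s hs => hderiv s (mem_Ici_of_Ioi hs))
  exact div_ne_zero (hW c) (pow_ne_zero 2 (hne c (mem_Ici_of_Ioi hc))) hc0

/-- If `y₂` is a principal solution at `+∞` of a nonoscillatory equation with
`Q ≥ 0`, with largest zero at `a`, then any linearly independent solution `y₁`
vanishes at some `s > a`. -/
theorem lin_indep_solution_vanishes_after_largest_zero_of_principal
    (Q y₁ y₂ : ℝ → ℝ) (a : ℝ) (hQ : Continuous Q) (hQpos : ∀ s, 0 ≤ Q s)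
    (hnonosc : ∀ y, IsSol Q y → y ≠ 0 → ∃ s₀ : ℝ, ∀ s ≥ s₀, y s ≠ 0)
    (hy₂ : IsSol Q y₂) (hy₂ne : y₂ ≠ 0)
    (hprincipal : ∀ z, IsSol Q z → (∀ s, z s * deriv y₂ s - y₂ s * deriv z s ≠ 0) →
      Tendsto (fun s => y₂ s / z s) atTop (nhds 0))
    (ha : y₂ a = 0) (hlargest : ∀ s, a < s → y₂ s ≠ 0)
    (hy₁ : IsSol Q y₁)
    (hW : ∀ s, y₁ s * deriv y₂ s - y₂ s * deriv y₁ s ≠ 0) :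
    ∃ s, a < s ∧ y₁ s = 0 :=
  lin_indep_solution_vanishes_after_largest_zero_of_principal_general Q y₁ y₂ a hy₂ hprincipal ha
    hy₁ hW
end
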